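/- arXiv:1905.03376 — 2 statements merged into one kernel-verified Lean document; each statement's English description precedes it below -/
import Mathlib

section
/- Let C be an n-cube (a functor from {0→1}^n) in a category with finite limits, and let C' be an (n-1)-dimensional face of C containing the initial vertex in one coordinate direction, with C'' the opposite face. If C'' is a limit cube (exhibits its initial vertex as the limit of the rest of its diagram), then C is a limit cube if and only if C' is a limit cube. -/
open CategoryTheory

/-- The vertex poset of the `n`-cube `{0 → 1}ⁿ`, regarded as a category. -/
def CubeVerts (n : ℕ) : Type := Fin n → Bool

noncomputable instance (n : ℕ) : PartialOrder (CubeVerts n) :=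
  inferInstanceAs (PartialOrder (Fin n → Bool))

/-- An `n`-cube in a category: a functor from the poset `{0 → 1}ⁿ`.
It is a *limit cube* if it exhibits the value at the initial vertex `(0,...,0)` as the
limit of the diagram on the remaining `2ⁿ - 1` vertices. -/
def IsLimitCube {𝒞 : Type*} [Category 𝒞] {n : ℕ} (F : CubeVerts n ⥤ 𝒞) : Prop :=
  ∀ (T : 𝒞) (t : ∀ ε : CubeVerts n, ε ≠ (fun _ => false) → (T ⟶ F.obj ε)),
    (∀ (ε δ : CubeVerts n) (hε : ε ≠ fun _ => false) (hδ : δ ≠ fun _ => false) (h : ε ≤ δ),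
      t ε hε ≫ F.map (homOfLE h) = t δ hδ) →
    ∃! u : T ⟶ F.obj (fun _ => false),
      ∀ (ε : CubeVerts n) (hε : ε ≠ fun _ => false),
        u ≫ F.map (homOfLE (fun i => Bool.false_le (ε i))) = t ε hε

/-- Inserting a fixed value in coordinate `i`: the inclusion of a face of the cube. -/
def insFace {n : ℕ} (i : Fin (n + 1)) (b : Bool) (ε : CubeVerts n) : CubeVerts (n + 1) :=
  i.insertNth b ε

theorem insFace_monotone {n : ℕ} (i : Fin (n + 1)) (b : Bool) : Monotone (insFace i b) := by
  intro ε δ h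
  intro j
  by_cases hj : j = i
  · subst hj
    have e1 := Fin.insertNth_apply_same (α := fun _ => Bool) j b ε
    have e2 := Fin.insertNth_apply_same (α := fun _ => Bool) j b δ
    exact le_of_eq (e1.trans e2.symm)
  · obtain ⟨k, rfl⟩ := Fin.exists_succAbove_eq hj
    have e1 := Fin.insertNth_apply_succAbove (α := fun _ => Bool) i b ε k
    have e2 := Fin.insertNth_apply_succAbove (α := fun _ => Bool) i b δ k
    exact e1.le.trans ((h k).trans e2.ge)

/-- The face of an `(n+1)`-cube in coordinate direction `i` at level `b`. -/
noncomputable def cubeFace {𝒞 : Type*} [Category 𝒞] {n : ℕ} (F : CubeVerts (n + 1) ⥤ 𝒞)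
    (i : Fin (n + 1)) (b : Bool) : CubeVerts n ⥤ 𝒞 :=
  (Monotone.functor (insFace_monotone i b)).comp F

/-!
Restricting a cone over the punctured cube to the punctured face `C'` is a bijection once `C''`
is a limit cube: the legs into `C''` are forced, since pushing the legs into `C'` along
direction `i` gives a cone over the punctured face `C''`, whose unique factorisation through
the initial vertex of `C''` must be the leg there. The restriction sends the cone induced by
a map into the initial vertex of the cube to the cone induced on `C'` by the same map, so one
family of induced cones is all cones exactly when the other is.
-/

namespace CategoryTheory.Functor

variable {𝒞 : Type*} [Category 𝒞] {P : Type*} [Preorder P]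

theorem map_homOfLE_comp (F : P ⥤ 𝒞) {a b c : P} (h₁ : a ≤ b) (h₂ : b ≤ c) :
    F.map (homOfLE h₁) ≫ F.map (homOfLE h₂) = F.map (homOfLE (h₁.trans h₂)) := by
  rw [← F.map_comp, homOfLE_comp]

theorem bijective_comp_map_homOfLE (F : P ⥤ 𝒞) {a b : P} (h : a ≤ b) (h' : b ≤ a)
    (T : 𝒞) : Function.Bijective fun u : T ⟶ F.obj a => u ≫ F.map (homOfLE h) :=
  Function.bijective_iff_has_inverse.2
    ⟨fun u => u ≫ F.map (homOfLE h'),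
      fun u => by simp [F.map_homOfLE_comp],
      fun u => by simp [F.map_homOfLE_comp]⟩

end CategoryTheory.Functor

section

variable {𝒞 : Type*} [Category 𝒞] {P : Type*} [Preorder P] [OrderBot P]

structure PuncturedCone (F : P ⥤ 𝒞) (T : 𝒞) where
  leg : ∀ p : P, p ≠ ⊥ → (T ⟶ F.obj p)
  leg_comp_map : ∀ (p q : P) (hp : p ≠ ⊥) (hq : q ≠ ⊥) (h : p ≤ q),
    leg p hp ≫ F.map (homOfLE h) = leg q hq

namespace PuncturedCone

variable {F : P ⥤ 𝒞} {T : 𝒞}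

@[ext]
theorem ext {c c' : PuncturedCone F T} (h : ∀ p hp, c.leg p hp = c'.leg p hp) : c = c' := by
  cases c; cases c'; congr; funext p hp; exact h p hp

noncomputable def ofHom (u : T ⟶ F.obj ⊥) : PuncturedCone F T where
  leg _ _ := u ≫ F.map (homOfLE bot_le)
  leg_comp_map _ _ _ _ _ := by rw [Category.assoc, F.map_homOfLE_comp]

noncomputable def postcomp {G : P ⥤ 𝒞} (α : F ⟶ G) (c : PuncturedCone F T) :
    PuncturedCone G T where
  leg p hp := c.leg p hp ≫ α.app p
  leg_comp_map p q hp hq h := by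
    rw [Category.assoc, ← α.naturality, ← Category.assoc, c.leg_comp_map]

end PuncturedCone

end

noncomputable instance (n : ℕ) : OrderBot (CubeVerts n) :=
  inferInstanceAs (OrderBot (Fin n → Bool))

theorem CubeVerts.bot_apply {n : ℕ} (j : Fin n) : (⊥ : CubeVerts n) j = false := rfl

theorem isLimitCube_iff_bijective_ofHom {𝒞 : Type*} [Category 𝒞] {n : ℕ}
    (F : CubeVerts n ⥤ 𝒞) :
    IsLimitCube F ↔ ∀ T, Function.Bijective (PuncturedCone.ofHom (F := F) (T := T)) := by
  simp only [Function.bijective_iff_existsUnique, PuncturedCone.ext_iff]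
  exact ⟨fun h T c => h T c.leg c.leg_comp_map, fun h T t ht => h T ⟨t, ht⟩⟩

section Faces

variable {n : ℕ} (i : Fin (n + 1))

def removeCoord (δ : CubeVerts (n + 1)) : CubeVerts n := fun j => δ (i.succAbove j)

theorem insFace_le_iff {b : Bool} {ε : CubeVerts n} {δ : CubeVerts (n + 1)} :
    insFace i b ε ≤ δ ↔ b ≤ δ i ∧ ε ≤ removeCoord i δ :=
  Fin.insertNth_le_iff

theorem removeCoord_insFace (b : Bool) (ε : CubeVerts n) : removeCoord i (insFace i b ε) = ε :=
  Fin.removeNth_insertNth (α := fun _ => Bool) i b ε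

theorem insFace_self_removeCoord (δ : CubeVerts (n + 1)) :
    insFace i (δ i) (removeCoord i δ) = δ :=
  Fin.insertNth_self_removeNth (α := fun _ => Bool) i δ

theorem removeCoord_mono {δ δ' : CubeVerts (n + 1)} (h : δ ≤ δ') :
    removeCoord i δ ≤ removeCoord i δ' :=
  fun j => h (i.succAbove j)

theorem insFace_apply_self (b : Bool) (ε : CubeVerts n) : insFace i b ε i = b :=
  Fin.insertNth_apply_same (α := fun _ => Bool) i b ε

theorem insFace_false_le_insFace_true (ε : CubeVerts n) :
    insFace i false ε ≤ insFace i true ε :=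
  (insFace_le_iff i).2 ⟨Bool.false_le _, (removeCoord_insFace i true ε).ge⟩

theorem insFace_ne_bot {b : Bool} {ε : CubeVerts n} (hε : ε ≠ ⊥) :
    insFace i b ε ≠ ⊥ := by
  intro h
  exact hε (by rw [← removeCoord_insFace i b ε, h]; rfl)

theorem insFace_true_ne_bot (ε : CubeVerts n) : insFace i true ε ≠ ⊥ := by
  intro h
  simpa [insFace_apply_self, CubeVerts.bot_apply] using congrFun h i

theorem insFace_false_bot : insFace i false (⊥ : CubeVerts n) = ⊥ :=
  Fin.insertNth_eq_iff.2 ⟨rfl, rfl⟩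

theorem removeCoord_ne_bot {δ : CubeVerts (n + 1)} (hδ : δ ≠ ⊥) (hδi : δ i = false) :
    removeCoord i δ ≠ ⊥ := by
  intro h
  apply hδ
  rw [← insFace_self_removeCoord i δ, hδi, h, insFace_false_bot]

end Faces

section

variable {𝒞 : Type*} [Category 𝒞] {n : ℕ} (i : Fin (n + 1))

noncomputable def insFaceHom :
    (insFace_monotone i false).functor ⟶ (insFace_monotone i true).functor where
  app ε := homOfLE (insFace_false_le_insFace_true i ε)

noncomputable def cubeFaceHom (F : CubeVerts (n + 1) ⥤ 𝒞) :
    cubeFace F i false ⟶ cubeFace F i true :=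
  Functor.whiskerRight (insFaceHom i) F

namespace PuncturedCone

variable {F : CubeVerts (n + 1) ⥤ 𝒞} {T : 𝒞}

noncomputable def restrictFace (c : PuncturedCone F T) : PuncturedCone (cubeFace F i false) T where
  leg ε hε := c.leg (insFace i false ε) (insFace_ne_bot i hε)
  leg_comp_map _ _ _ _ h := c.leg_comp_map _ _ _ _ (insFace_monotone i false h)

/-- `s.leg`, typed so that it composes with `F.map` without unfolding `cubeFace`. -/
def faceLeg {b : Bool} (s : PuncturedCone (cubeFace F i b) T) (ε : CubeVerts n)
    (hε : ε ≠ ⊥) : T ⟶ F.obj (insFace i b ε) :=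
  s.leg ε hε

theorem faceLeg_comp_map {b : Bool} (s : PuncturedCone (cubeFace F i b) T) {ε δ : CubeVerts n}
    (hε : ε ≠ ⊥) (hδ : δ ≠ ⊥) (h : ε ≤ δ) :
    s.faceLeg i ε hε ≫ F.map (homOfLE (insFace_monotone i b h)) = s.faceLeg i δ hδ :=
  s.leg_comp_map ε δ hε hδ h

theorem restrictFace_ofHom (u : T ⟶ F.obj ⊥) :
    restrictFace i (ofHom u) =
      ofHom (F := cubeFace F i false)
        (u ≫ F.map (homOfLE (bot_le : ⊥ ≤ insFace i false ⊥))) := by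
  ext ε hε
  show u ≫ F.map (homOfLE bot_le) =
    (u ≫ F.map (homOfLE bot_le)) ≫ F.map (homOfLE (insFace_monotone i false bot_le))
  rw [Category.assoc, F.map_homOfLE_comp]

theorem ofHom_leg_insFace_true (c : PuncturedCone F T) :
    ofHom (F := cubeFace F i true) (c.leg (insFace i true ⊥) (insFace_true_ne_bot i ⊥)) =
      (restrictFace i c).postcomp (cubeFaceHom i F) := by
  ext ε hε
  show c.leg _ _ ≫ F.map (homOfLE (insFace_monotone i true bot_le)) =
    c.leg (insFace i false ε) (insFace_ne_bot i hε) ≫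
      F.map (homOfLE (insFace_false_le_insFace_true i ε))
  rw [c.leg_comp_map _ _ _ (insFace_true_ne_bot i ε),
    c.leg_comp_map _ _ _ (insFace_true_ne_bot i ε)]

noncomputable def extendFaceLeg (s : PuncturedCone (cubeFace F i false) T)
    (v : T ⟶ F.obj (insFace i true ⊥)) (δ : CubeVerts (n + 1)) (hδ : δ ≠ ⊥) :
    T ⟶ F.obj δ :=
  if hδi : δ i = true then
    v ≫ F.map (homOfLE ((insFace_le_iff i).2 ⟨hδi.ge, bot_le⟩))
  else
    s.faceLeg i _ (removeCoord_ne_bot i hδ (by simpa using hδi)) ≫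
      F.map (homOfLE ((insFace_le_iff i).2 ⟨Bool.false_le _, le_rfl⟩))

noncomputable def extendFace (s : PuncturedCone (cubeFace F i false) T)
    (v : T ⟶ F.obj (insFace i true ⊥))
    (hv : ofHom (F := cubeFace F i true) v = s.postcomp (cubeFaceHom i F)) : PuncturedCone F T where
  leg := extendFaceLeg i s v
  leg_comp_map δ δ' hδ hδ' h := by
    unfold extendFaceLeg
    by_cases hδ'i : δ' i = true <;> by_cases hδi : δ i = true
    · rw [dif_pos hδi, dif_pos hδ'i, Category.assoc, F.map_homOfLE_comp]
    · rw [dif_neg hδi, dif_pos hδ'i]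
      have hε : removeCoord i δ ≠ ⊥ := removeCoord_ne_bot i hδ (by simpa using hδi)
      have hv' := PuncturedCone.ext_iff.1 hv _ hε
      have hεδ' : insFace i true (removeCoord i δ) ≤ δ' :=
        (insFace_le_iff i).2 ⟨hδ'i.ge, removeCoord_mono i h⟩
      change v ≫ F.map (homOfLE (insFace_monotone i true bot_le)) =
        s.faceLeg i _ hε ≫ F.map (homOfLE (insFace_false_le_insFace_true i _)) at hv'
      rw [Category.assoc, F.map_homOfLE_comp,
        ← F.map_homOfLE_comp (insFace_monotone i true bot_le) hεδ', ← Category.assoc, hv',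
        Category.assoc, F.map_homOfLE_comp]
    · exact absurd (hδi ▸ h i) (by simp [hδ'i])
    · rw [dif_neg hδi, dif_neg hδ'i, ← s.faceLeg_comp_map i
          (removeCoord_ne_bot i hδ (by simpa using hδi)) _ (removeCoord_mono i h),
        Category.assoc, Category.assoc, F.map_homOfLE_comp, F.map_homOfLE_comp]

theorem restrictFace_extendFace (s : PuncturedCone (cubeFace F i false) T)
    (v : T ⟶ F.obj (insFace i true ⊥))
    (hv : ofHom (F := cubeFace F i true) v = s.postcomp (cubeFaceHom i F)) :
    restrictFace i (extendFace i s v hv) = s := by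
  ext ε hε
  show extendFaceLeg i s v (insFace i false ε) (insFace_ne_bot i hε) = s.faceLeg i ε hε
  rw [extendFaceLeg, dif_neg (by simp [insFace_apply_self])]
  exact s.faceLeg_comp_map i _ _ (removeCoord_insFace i false ε).le

theorem extendFace_restrictFace (c : PuncturedCone F T) :
    extendFace i (restrictFace i c) _ (ofHom_leg_insFace_true i c) = c := by
  ext δ hδ
  show extendFaceLeg i _ _ δ hδ = c.leg δ hδ
  unfold extendFaceLeg
  split_ifs <;> exact c.leg_comp_map _ _ _ _ _

theorem restrictFace_bijective
    (hTop : Function.Bijective (ofHom (F := cubeFace F i true) (T := T))) :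
    Function.Bijective (restrictFace (F := F) (T := T) i) := by
  refine ⟨fun c c' h => ?_, fun s => ?_⟩
  · have hv : c.leg (insFace i true ⊥) (insFace_true_ne_bot i ⊥) =
        c'.leg (insFace i true ⊥) (insFace_true_ne_bot i ⊥) :=
      hTop.1 (by rw [ofHom_leg_insFace_true, ofHom_leg_insFace_true, h])
    rw [← extendFace_restrictFace i c, ← extendFace_restrictFace i c']
    congr 1
  · obtain ⟨v, hv⟩ := hTop.2 (s.postcomp (cubeFaceHom i F))
    exact ⟨extendFace i s v hv, restrictFace_extendFace i s v hv⟩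

end PuncturedCone

end

theorem stmt12_general {𝒞 : Type*} [Category 𝒞] (n : ℕ)
    (F : CubeVerts (n + 1) ⥤ 𝒞) (i : Fin (n + 1))
    (h'' : IsLimitCube (cubeFace F i true)) :
    IsLimitCube F ↔ IsLimitCube (cubeFace F i false) := by
  rw [isLimitCube_iff_bijective_ofHom] at h''
  rw [isLimitCube_iff_bijective_ofHom, isLimitCube_iff_bijective_ofHom]
  refine forall_congr' fun T => ?_
  have hcomp : PuncturedCone.restrictFace i ∘ PuncturedCone.ofHom (F := F) (T := T) =
      PuncturedCone.ofHom (F := cubeFace F i false) ∘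
        fun u => u ≫ F.map (homOfLE (bot_le : ⊥ ≤ insFace i false ⊥)) :=
    funext fun u => PuncturedCone.restrictFace_ofHom i u
  rw [← (PuncturedCone.restrictFace_bijective i (h'' T)).of_comp_iff', hcomp]
  exact Function.Bijective.of_comp_iff _
    (F.bijective_comp_map_homOfLE _ (insFace_false_bot i).le T)

/-- If the face of an `(n+1)`-cube opposite to the initial vertex in direction `i` is a
limit cube, then the cube is a limit cube iff the face containing the initial vertex is. -/
theorem stmt12 {𝒞 : Type*} [Category 𝒞] [Limits.HasFiniteLimits 𝒞] (n : ℕ)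
    (F : CubeVerts (n + 1) ⥤ 𝒞) (i : Fin (n + 1))
    (h'' : IsLimitCube (cubeFace F i true)) :
    IsLimitCube F ↔ IsLimitCube (cubeFace F i false) :=
  stmt12_general n F i h''
end

section
/- For composable monotone maps of finite ordered sets X →f Y →g Z with α = g ∘ f, there are canonical simplicial maps H(f) → H(α) and H(g) → H(α), where H(φ) for φ : A → B is the simplicial subset of the simplex ⟨A⟩ = N(Hom(A, {0<1})) generated by the images of ⟨φ^{-1}(b)⟩ for b ∈ B under interval extension. Moreover, these maps make the evident squares commute: for X →f Y →g Z →h W, the square H(g) → H(h∘g), H(g∘f) → H(h∘g∘f) commutes. -/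
/-- Membership in the simplicial subset `H(φ) ⊆ ⟨A⟩` for a monotone map
`φ : Fin m →o Fin r`.  A `k`-simplex of `⟨Fin m⟩` is a monotone chain
`c : Fin (k+1) →o (Fin m →o Bool)` of monotone maps `Fin m → {0 < 1}`; it belongs to
`H(φ)` iff it lies in the image of `⟨φ⁻¹(b)⟩` for some `b`, under the interval
extension sending everything below the fibre to `0` and everything above it to `1`. -/
def MemH (m r : ℕ) (φ : Fin m →o Fin r) (k : ℕ)
    (c : Fin (k + 1) →o (Fin m →o Bool)) : Prop :=
  ∃ b : Fin r, ∀ (i : Fin (k + 1)) (x : Fin m),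
    (φ x < b → c i x = false) ∧ (b < φ x → c i x = true)

/-- Precomposition of a chain of vertices of `⟨Fin n⟩` with `f : Fin m →o Fin n`,
giving a chain of vertices of `⟨Fin m⟩` (functoriality of `⟨-⟩` applied to `f`). -/
def preH (m n k : ℕ) (f : Fin m →o Fin n)
    (c : Fin (k + 1) →o (Fin n →o Bool)) : Fin (k + 1) →o (Fin m →o Bool) :=
  ⟨fun i => (c i).comp f, fun i j hij => by
    intro x
    exact c.monotone hij (f x)⟩

/-- For composable monotone maps `X →f Y →g Z →h W` of finite ordered sets there are
canonical simplicial maps `H(f) → H(g∘f)` (the inclusion) and `H(g) → H(g∘f)` (induced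
by `⟨-⟩` applied to `f`); moreover `H(φ)` is closed under simplicial structure maps,
and the square formed by `H(g) → H(h∘g) → H(h∘g∘f)` and `H(g) → H(g∘f) → H(h∘g∘f)`
commutes: both composites act on chains by `c ↦ c ∘ f` (precomposition `preH`). -/
theorem stmt19 (m n r s : ℕ) (f : Fin m →o Fin n) (g : Fin n →o Fin r)
    (h : Fin r →o Fin s) :
    -- `H(φ)` is a simplicial subset: closed under reindexing
    (∀ (k k' : ℕ) (θ : Fin (k' + 1) →o Fin (k + 1)) (c : Fin (k + 1) →o (Fin n →o Bool)),
      MemH n r g k c → MemH n r g k' (c.comp θ)) ∧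
    -- Case 1: `H(f) ⊆ H(g ∘ f)`, the canonical map `H(f) → H(α)` is an inclusion
    (∀ (k : ℕ) (c : Fin (k + 1) →o (Fin m →o Bool)),
      MemH m n f k c → MemH m r (g.comp f) k c) ∧
    -- Case 2: precomposition with `f` maps `H(g)` into `H(g ∘ f)`
    (∀ (k : ℕ) (c : Fin (k + 1) →o (Fin n →o Bool)),
      MemH n r g k c → MemH m r (g.comp f) k (preH m n k f c)) ∧
    -- the square commutes: both composites `H(g) → H(h∘g∘f)` are `c ↦ preH f c`,
    -- and land in `H(h∘g∘f)` (written either way of associating the composite)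
    (∀ (k : ℕ) (c : Fin (k + 1) →o (Fin n →o Bool)), MemH n r g k c →
      MemH n s (h.comp g) k c ∧
      MemH m s ((h.comp g).comp f) k (preH m n k f c) ∧
      MemH m s (h.comp (g.comp f)) k (preH m n k f c)) := by
  refine ⟨?_, ?_, ?_, ?_⟩
  · rintro k k' θ c ⟨b, hb⟩
    exact ⟨b, fun i x => hb (θ i) x⟩
  · rintro k c ⟨b, hb⟩
    refine ⟨g b, fun i x => ⟨fun hlt => ?_, fun hlt => ?_⟩⟩
    · exact (hb i x).1 (lt_of_not_ge fun hle => absurd (g.monotone hle) (not_le_of_gt hlt))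
    · exact (hb i x).2 (lt_of_not_ge fun hle => absurd (g.monotone hle) (not_le_of_gt hlt))
  · rintro k c ⟨b, hb⟩
    exact ⟨b, fun i x => ⟨fun hlt => (hb i (f x)).1 hlt, fun hlt => (hb i (f x)).2 hlt⟩⟩
  · rintro k c ⟨b, hb⟩
    have h1 : ∀ (i : Fin (k+1)) (y : Fin n), (h (g y) < h b → c i y = false) ∧
        (h b < h (g y) → c i y = true) := fun i y =>
      ⟨fun hlt => (hb i y).1 (lt_of_not_ge fun hle => absurd (h.monotone hle) (not_le_of_gt hlt)),
       fun hlt => (hb i y).2 (lt_of_not_ge fun hle => absurd (h.monotone hle) (not_le_of_gt hlt))⟩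
    exact ⟨⟨h b, fun i y => h1 i y⟩,
      ⟨h b, fun i x => h1 i (f x)⟩,
      ⟨h b, fun i x => h1 i (f x)⟩⟩
end
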